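/- arXiv:1405.2570 — 2 statements merged into one kernel-verified Lean document; each statement's English description precedes it below -/
import Mathlib

section
/- Under Assumption A2 with constants τ_{ij} > 0 (i,j ∈ {1,2}) and the H\u00fcsler–Reiss condition (1−ρ₀(n))·ln n → λ², if λ² ≥ −τ̃ where τ̃ = τ₁₂ − (τ₁₁+τ₂₂)/2, then with τ_{ii}(n) = τ_{ii}/ln n and ρ̃₀(n) = (ρ₀(n) − τ₁₂(n))/√((1−τ₁₁(n))(1−τ₂₂(n))) and b_n = √(2 ln n) − ln(4π ln n)/(2√(2 ln n)), one has lim_{n→∞} b_n²·(1−ρ̃₀(n))/(1+ρ̃₀(n)) = λ² + τ̃. -/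
/-!
Write `L = log n` and `s = √((1 - τ₁₁/L)(1 - τ₂₂/L))`. Rationalizing,
`L (s - 1) = (τ₁₁τ₂₂/L - (τ₁₁ + τ₂₂)) / (s + 1) → -(τ₁₁ + τ₂₂)/2`, so
`L (1 - ρ̃₀) = (L (s - 1) + L (1 - ρ₀) + τ₁₂) / s → λ² + τ̃`; in particular `ρ̃₀ → 1`.
Since `b_n² / L → 2`, the product `(b_n² / L) · L (1 - ρ̃₀) / (1 + ρ̃₀)` tends to `2 (λ² + τ̃) / 2`.
-/

open Real Filter

noncomputable def bseq (n : ℕ) : ℝ :=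
  Real.sqrt (2 * Real.log n) -
    Real.log (4 * Real.pi * Real.log n) / (2 * Real.sqrt (2 * Real.log n))

open Topology

lemma sq_sqrt_two_mul_sub_div_div {L : ℝ} (hL : 0 < L) (c : ℝ) :
    (√(2 * L) - c / (2 * √(2 * L))) ^ 2 / L = 2 - c / L + (c / L) ^ 2 / 8 := by
  have ht : 0 < √(2 * L) := Real.sqrt_pos.mpr (by positivity)
  have ht2 : √(2 * L) ^ 2 = 2 * L := Real.sq_sqrt (by positivity)
  field_simp
  rw [ht2]
  ring

lemma tendsto_log_const_mul_div_atTop {k : ℝ} (hk : k ≠ 0) :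
    Tendsto (fun x : ℝ => Real.log (k * x) / x) atTop (𝓝 0) := by
  have h := (tendsto_const_nhds (x := Real.log k)).div_atTop tendsto_id |>.add
    Real.isLittleO_log_id_atTop.tendsto_div_nhds_zero
  rw [add_zero] at h
  refine h.congr' ?_
  filter_upwards [eventually_gt_atTop 0] with x hx
  rw [Real.log_mul hk hx.ne', add_div]
  rfl

lemma tendsto_bseq_sq_div_log :
    Tendsto (fun n : ℕ => bseq n ^ 2 / Real.log n) atTop (𝓝 2) := by
  have hlog : Tendsto (fun n : ℕ => Real.log n) atTop atTop :=
    Real.tendsto_log_atTop.comp tendsto_natCast_atTop_atTop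
  have hc := (tendsto_log_const_mul_div_atTop (by positivity : 4 * π ≠ 0)).comp hlog
  have h := (tendsto_const_nhds (x := (2 : ℝ))).sub hc |>.add ((hc.pow 2).div_const 8)
  rw [zero_pow two_ne_zero, zero_div, sub_zero, add_zero] at h
  refine h.congr' ?_
  filter_upwards [hlog.eventually_gt_atTop 0] with n hn
  exact (sq_sqrt_two_mul_sub_div_div hn _).symm

section

variable {α : Type*} {l : Filter α} {L : α → ℝ}

lemma tendsto_sqrt_one_sub_div_mul_one_sub_div (hL : Tendsto L l atTop) (b c : ℝ) :
    Tendsto (fun x => √((1 - b / L x) * (1 - c / L x))) l (𝓝 1) := by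
  have h := ((tendsto_const_nhds (x := (1 : ℝ))).sub
    ((tendsto_const_nhds (x := b)).div_atTop hL)).mul
    ((tendsto_const_nhds (x := (1 : ℝ))).sub ((tendsto_const_nhds (x := c)).div_atTop hL))
  rw [sub_zero, mul_one] at h
  simpa using h.sqrt

lemma tendsto_mul_sqrt_one_sub_div_mul_one_sub_div_sub_one (hL : Tendsto L l atTop)
    (b c : ℝ) :
    Tendsto (fun x => L x * (√((1 - b / L x) * (1 - c / L x)) - 1)) l
      (𝓝 (-(b + c) / 2)) := by
  have hs := tendsto_sqrt_one_sub_div_mul_one_sub_div hL b c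
  -- rationalize: `L (s - 1) = L (s² - 1) / (s + 1)`, and `L (s² - 1) = b c / L - (b + c)`
  have h := (((tendsto_const_nhds (x := b * c)).div_atTop hL).sub
    (tendsto_const_nhds (x := b + c))).div (hs.add_const 1) (by norm_num)
  rw [zero_sub, one_add_one_eq_two] at h
  refine h.congr' ?_
  filter_upwards [hL.eventually_gt_atTop 0, hL.eventually_gt_atTop b,
    hL.eventually_gt_atTop c] with x hx hb hc
  have hP : 0 ≤ (1 - b / L x) * (1 - c / L x) :=
    mul_nonneg (by rw [sub_nonneg, div_le_one hx]; exact hb.le)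
      (by rw [sub_nonneg, div_le_one hx]; exact hc.le)
  have hss := Real.mul_self_sqrt hP
  set s := √((1 - b / L x) * (1 - c / L x))
  have hs0 : 0 ≤ s := Real.sqrt_nonneg _
  rw [Pi.div_apply, div_eq_iff (by positivity)]
  have hLs : L x * (s - 1) * (s + 1) = L x * (s * s) - L x := by ring
  rw [hLs, hss]
  field_simp
  ring

lemma tendsto_mul_one_sub_sub_div_div_sqrt (hL : Tendsto L l atTop) {ρ : α → ℝ} {lsq : ℝ}
    (hρ : Tendsto (fun x => (1 - ρ x) * L x) l (𝓝 lsq)) (a b c : ℝ) :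
    Tendsto (fun x => L x * (1 - (ρ x - a / L x) / √((1 - b / L x) * (1 - c / L x)))) l
      (𝓝 (lsq + (a - (b + c) / 2))) := by
  have hs := tendsto_sqrt_one_sub_div_mul_one_sub_div hL b c
  have h := (((tendsto_mul_sqrt_one_sub_div_mul_one_sub_div_sub_one hL b c).add hρ).add_const
    a).div hs one_ne_zero
  rw [div_one, show -(b + c) / 2 + lsq + a = lsq + (a - (b + c) / 2) by ring] at h
  refine h.congr' ?_
  filter_upwards [hL.eventually_gt_atTop 0, hs.eventually (lt_mem_nhds one_pos)] with x hx hs0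
  simp only [Pi.div_apply]
  generalize √((1 - b / L x) * (1 - c / L x)) = s at hs0 ⊢
  field_simp
  ring

lemma tendsto_zero_of_tendsto_mul_of_tendsto_atTop (hL : Tendsto L l atTop) {f : α → ℝ} {y : ℝ}
    (hf : Tendsto (fun x => L x * f x) l (𝓝 y)) : Tendsto f l (𝓝 0) := by
  refine (hf.div_atTop hL).congr' ?_
  filter_upwards [hL.eventually_gt_atTop 0] with x hx
  field_simp

end

theorem stmt_8_general (ρ₀ : ℕ → ℝ)
    (lsq τ₁₁ τ₂₂ τ₁₂ : ℝ)
    (hHR : Tendsto (fun n : ℕ => (1 - ρ₀ n) * Real.log n) atTop (nhds lsq)) :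
    Tendsto (fun n : ℕ =>
        (bseq n) ^ 2 *
          (1 - (ρ₀ n - τ₁₂ / Real.log n) /
              Real.sqrt ((1 - τ₁₁ / Real.log n) * (1 - τ₂₂ / Real.log n))) /
          (1 + (ρ₀ n - τ₁₂ / Real.log n) /
              Real.sqrt ((1 - τ₁₁ / Real.log n) * (1 - τ₂₂ / Real.log n))))
      atTop (nhds (lsq + (τ₁₂ - (τ₁₁ + τ₂₂) / 2))) := by
  have hlog : Tendsto (fun n : ℕ => Real.log n) atTop atTop :=
    Real.tendsto_log_atTop.comp tendsto_natCast_atTop_atTop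
  have hnum := tendsto_mul_one_sub_sub_div_div_sqrt hlog hHR τ₁₂ τ₁₁ τ₂₂
  have hden : Tendsto (fun n : ℕ => 1 + (ρ₀ n - τ₁₂ / Real.log n) /
      Real.sqrt ((1 - τ₁₁ / Real.log n) * (1 - τ₂₂ / Real.log n))) atTop (𝓝 2) := by
    have h := (tendsto_zero_of_tendsto_mul_of_tendsto_atTop hlog hnum).const_sub 2
    rw [sub_zero] at h
    refine h.congr fun n => ?_
    ring
  have h := tendsto_bseq_sq_div_log.mul (hnum.div hden two_ne_zero)
  rw [mul_div_cancel₀ _ two_ne_zero] at h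
  refine h.congr' ?_
  filter_upwards [hlog.eventually_gt_atTop 0] with n hn
  simp only [Pi.div_apply]
  generalize (ρ₀ n - τ₁₂ / Real.log n) / √((1 - τ₁₁ / Real.log n) * (1 - τ₂₂ / Real.log n)) = r
  field_simp

theorem stmt_8 (ρ₀ : ℕ → ℝ) (hρ : ∀ n, -1 < ρ₀ n ∧ ρ₀ n < 1)
    (lsq τ₁₁ τ₂₂ τ₁₂ : ℝ) (hlsq : 0 ≤ lsq)
    (hτ₁₁ : 0 < τ₁₁) (hτ₂₂ : 0 < τ₂₂) (hτ₁₂ : 0 < τ₁₂)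
    (hτle : τ₁₂ ≤ Real.sqrt (τ₁₁ * τ₂₂))
    (hHR : Tendsto (fun n : ℕ => (1 - ρ₀ n) * Real.log n) atTop (nhds lsq))
    (hge : lsq ≥ -(τ₁₂ - (τ₁₁ + τ₂₂) / 2)) :
    Tendsto (fun n : ℕ =>
        (bseq n) ^ 2 *
          (1 - (ρ₀ n - τ₁₂ / Real.log n) /
              Real.sqrt ((1 - τ₁₁ / Real.log n) * (1 - τ₂₂ / Real.log n))) /
          (1 + (ρ₀ n - τ₁₂ / Real.log n) /
              Real.sqrt ((1 - τ₁₁ / Real.log n) * (1 - τ₂₂ / Real.log n))))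
      atTop (nhds (lsq + (τ₁₂ - (τ₁₁ + τ₂₂) / 2))) :=
  stmt_8_general ρ₀ lsq τ₁₁ τ₂₂ τ₁₂ hHR
end

section
/- Let η_k, k ≥ 1, be bounded random variables with |η_k| ≤ 1 and suppose Var(∑_{k=1}^n (1/k)·η_k) ≤ c·(ln n)²·(ln ln n)^{−(1+ε)} for some c > 0 and ε > 0. If additionally E[η_k] = p for all k, then (1/ln n)·∑_{k=1}^n (1/k)·η_k → p almost surely as n → ∞. -/
/-!
Let `S n = ∑_{k ≤ n} η_k / k`, so that `E (S n) = p H n` with `H n = ∑_{k ≤ n} 1 / k ~ log n`.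
Along `n_j = ⌈exp (exp ((j+1)^γ))⌉` with `1/(1+ε) < γ < 1` we have `log log n_j ≥ (j+1)^γ`, so the
variance bound and Chebyshev's inequality make `∑_j P(|S n_j - p H n_j| ≥ δ log n_j)` finite, and
Borel–Cantelli gives `S n_j - p H n_j = o(log n_j)` almost surely. Between `n_j` and `n_{j+1}` the
centred sum moves by at most `2 (H n_{j+1} - H n_j)`, which is `o(log n_j)` because `γ < 1` makes
`log n_{j+1} ~ log n_j`; hence `S n - p H n = o(log n)`.
-/

open Real Filter MeasureTheory ProbabilityTheory Asymptotics Topology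

theorem abs_sum_sub_sum_le_of_subset {ι : Type*} [DecidableEq ι] {s t : Finset ι} (hst : s ⊆ t)
    {f g : ι → ℝ} (hfg : ∀ i, |f i| ≤ g i) :
    |∑ i ∈ t, f i - ∑ i ∈ s, f i| ≤ ∑ i ∈ t, g i - ∑ i ∈ s, g i := by
  rw [← Finset.sum_sdiff hst, ← Finset.sum_sdiff hst (f := g), add_sub_cancel_right,
    add_sub_cancel_right]
  exact (Finset.abs_sum_le_sum_abs _ _).trans (Finset.sum_le_sum fun i _ => hfg i)

theorem exists_le_lt_succ_of_tendsto_atTop {M : ℕ → ℕ} (hM : Tendsto M atTop atTop) {j₀ n : ℕ}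
    (hn : M j₀ ≤ n) : ∃ j, j₀ ≤ j ∧ M j ≤ n ∧ n < M (j + 1) := by
  by_contra! h
  have hle : ∀ j, j₀ ≤ j → M j ≤ n := fun j hj =>
    Nat.le_induction hn (fun j hj ih => h j hj ih) j hj
  obtain ⟨j, hj, hlt⟩ := ((eventually_ge_atTop j₀).and (hM.eventually_gt_atTop n)).exists
  exact (hle j hj).not_gt hlt

theorem isLittleO_of_isLittleO_comp_of_abs_sub_le {t H L : ℕ → ℝ} {M : ℕ → ℕ}
    (hM : Tendsto M atTop atTop) (hL : Monotone L) (hL0 : ∀ n, 0 ≤ L n)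
    (hinc : ∀ m n, m ≤ n → |t n - t m| ≤ H n - H m)
    (ht : (fun j => t (M j)) =o[atTop] fun j => L (M j))
    (hgap : (fun j => H (M (j + 1)) - H (M j)) =o[atTop] fun j => L (M j)) :
    t =o[atTop] L := by
  refine IsLittleO.of_bound fun δ hδ => ?_
  obtain ⟨j₀, hj₀⟩ :=
    ((ht.bound (half_pos hδ)).and (hgap.bound (half_pos hδ))).exists_forall_of_atTop
  filter_upwards [eventually_ge_atTop (M j₀)] with n hn
  obtain ⟨j, hj, hMj, hMj1⟩ := exists_le_lt_succ_of_tendsto_atTop hM hn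
  obtain ⟨htj, hgap_j⟩ := hj₀ j hj
  simp only [Real.norm_eq_abs, abs_of_nonneg (hL0 _)] at htj hgap_j ⊢
  have hHn : H n ≤ H (M (j + 1)) := (abs_nonneg _).trans (hinc n _ hMj1.le) |> sub_nonneg.1
  calc |t n| ≤ δ / 2 * L (M j) + (H (M (j + 1)) - H (M j)) := by
        linarith [abs_sub_abs_le_abs_sub (t n) (t (M j)), hinc (M j) n hMj]
    _ ≤ δ * L (M j) := by linarith [le_abs_self (H (M (j + 1)) - H (M j))]
    _ ≤ δ * L n := by gcongr; exact hL hMj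

theorem Asymptotics.IsEquivalent.isLittleO_sub_comp_succ {H L : ℕ → ℝ} {M : ℕ → ℕ}
    (hHL : H ~[atTop] L) (hM : Tendsto M atTop atTop)
    (hL : (fun j => L (M (j + 1))) ~[atTop] fun j => L (M j)) :
    (fun j => H (M (j + 1)) - H (M j)) =o[atTop] fun j => L (M j) := by
  have hcomp := hHL.comp_tendsto hM
  have hcomp_succ := hHL.comp_tendsto (hM.comp (tendsto_add_atTop_nat 1))
  exact ((hcomp_succ.trans hL).trans hcomp.symm).isLittleO.trans_isBigO hcomp.isBigO

theorem tendsto_one_div_mul_of_isLittleO_sub {α : Type*} {l : Filter α} {f g : α → ℝ} {p : ℝ}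
    (h : (fun x => f x - p * g x) =o[l] g) (hg : ∀ᶠ x in l, g x ≠ 0) :
    Tendsto (fun x => 1 / g x * f x) l (𝓝 p) := by
  have hlim := h.tendsto_div_nhds_zero.add_const p
  rw [zero_add] at hlim
  refine hlim.congr' ?_
  filter_upwards [hg] with x hx
  field_simp
  ring

theorem monotone_log_natCast : Monotone fun n : ℕ => log n := fun m n hmn => by
  rcases m.eq_zero_or_pos with rfl | hm
  · simpa using log_natCast_nonneg n
  · exact log_le_log (by exact_mod_cast hm) (by exact_mod_cast hmn)

theorem log_natCeil_le {x : ℝ} (hx : 1 ≤ x) : log ⌈x⌉₊ ≤ log x + 1 := by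
  have hceil : (⌈x⌉₊ : ℝ) ≤ exp 1 * x := by
    nlinarith [Nat.ceil_lt_add_one (by linarith : 0 ≤ x), exp_one_gt_d9]
  calc log ⌈x⌉₊ ≤ log (exp 1 * x) :=
        log_le_log (by exact_mod_cast Nat.ceil_pos.2 (by linarith)) hceil
    _ = log x + 1 := by rw [log_mul (exp_pos 1).ne' (by linarith), log_exp, add_comm]

theorem isEquivalent_log_natCeil_exp {α : Type*} {l : Filter α} {y : α → ℝ}
    (hy : Tendsto y l atTop) : (fun x => log ⌈exp (y x)⌉₊) ~[l] y := by
  have hbdd : (fun x => log ⌈exp (y x)⌉₊ - y x) =O[l] fun _ => (1 : ℝ) := by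
    refine IsBigO.of_bound 1 ?_
    filter_upwards [hy.eventually_ge_atTop 0] with x hx
    have hlow : y x ≤ log ⌈exp (y x)⌉₊ := by
      simpa using log_le_log (exp_pos (y x)) (Nat.le_ceil _)
    have hup := log_natCeil_le (one_le_exp hx)
    rw [log_exp] at hup
    rw [norm_one, mul_one, Real.norm_eq_abs, abs_le]
    constructor <;> linarith
  exact hbdd.trans_isLittleO ((isLittleO_one_left_iff ℝ).2 (tendsto_abs_atTop_atTop.comp hy))

theorem isEquivalent_exp_of_tendsto_sub {α : Type*} {l : Filter α} {f g : α → ℝ}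
    (h : Tendsto (fun x => f x - g x) l (𝓝 0)) :
    (fun x => exp (f x)) ~[l] fun x => exp (g x) := by
  refine isEquivalent_of_tendsto_one ?_
  simpa [Function.comp_def, exp_sub, Pi.div_def] using (continuous_exp.tendsto 0).comp h

theorem tendsto_rpow_add_one_sub_rpow {γ : ℝ} (h0 : 0 ≤ γ) (h1 : γ < 1) :
    Tendsto (fun x : ℝ => (x + 1) ^ γ - x ^ γ) atTop (𝓝 0) := by
  have hlim : Tendsto (fun x : ℝ => γ * x ^ (γ - 1)) atTop (𝓝 0) := by
    simpa using (tendsto_rpow_neg_atTop (by linarith : 0 < 1 - γ)).const_mul γ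
  refine tendsto_of_tendsto_of_tendsto_of_le_of_le' tendsto_const_nhds hlim ?_ ?_
  · filter_upwards [eventually_ge_atTop 0] with x hx
    exact sub_nonneg.2 (rpow_le_rpow hx (by linarith) h0)
  · filter_upwards [eventually_gt_atTop 0] with x hx
    have hbernoulli := rpow_one_add_le_one_add_mul_self
      (by linarith [one_div_pos.2 hx] : -1 ≤ 1 / x) h0 h1.le
    calc (x + 1) ^ γ - x ^ γ = x ^ γ * (1 + 1 / x) ^ γ - x ^ γ := by
          rw [← mul_rpow hx.le (by positivity), mul_add, mul_one_div_cancel hx.ne', mul_one]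
      _ ≤ x ^ γ * (1 + γ * (1 / x)) - x ^ γ := by gcongr
      _ = γ * x ^ (γ - 1) := by rw [rpow_sub_one hx.ne']; field_simp; ring

theorem isEquivalent_harmonic_log : (fun n : ℕ => (harmonic n : ℝ)) ~[atTop] fun n => log n :=
  (tendsto_harmonic_sub_log.isBigO_one ℝ).trans_isLittleO ((isLittleO_one_left_iff ℝ).2
    (tendsto_abs_atTop_atTop.comp (tendsto_log_atTop.comp tendsto_natCast_atTop_atTop)))

noncomputable def doubleExpSeq (γ : ℝ) (j : ℕ) : ℕ := ⌈exp (exp (((j : ℝ) + 1) ^ γ))⌉₊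

section doubleExpSeq

variable {γ : ℝ}

theorem exp_rpow_le_log_doubleExpSeq (γ : ℝ) (j : ℕ) :
    exp (((j : ℝ) + 1) ^ γ) ≤ log (doubleExpSeq γ j) := by
  simpa [doubleExpSeq] using
    log_le_log (exp_pos _) (Nat.le_ceil (exp (exp (((j : ℝ) + 1) ^ γ))))

theorem one_le_log_doubleExpSeq (γ : ℝ) (j : ℕ) : 1 ≤ log (doubleExpSeq γ j) :=
  (one_le_exp (by positivity)).trans (exp_rpow_le_log_doubleExpSeq γ j)

theorem three_le_doubleExpSeq (γ : ℝ) (j : ℕ) : 3 ≤ doubleExpSeq γ j := by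
  have : (2 : ℝ) < doubleExpSeq γ j :=
    calc (2 : ℝ) < exp 1 := by linarith [exp_one_gt_d9]
      _ ≤ exp (exp (((j : ℝ) + 1) ^ γ)) := exp_le_exp.2 (one_le_exp (by positivity))
      _ ≤ doubleExpSeq γ j := Nat.le_ceil _
  exact_mod_cast this

theorem rpow_le_log_log_doubleExpSeq (γ : ℝ) (j : ℕ) :
    ((j : ℝ) + 1) ^ γ ≤ log (log (doubleExpSeq γ j)) := by
  simpa using log_le_log (exp_pos _) (exp_rpow_le_log_doubleExpSeq γ j)

theorem tendsto_doubleExpSeq (hγ : 0 < γ) : Tendsto (doubleExpSeq γ) atTop atTop :=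
  tendsto_nat_ceil_atTop.comp <| tendsto_exp_atTop.comp <| tendsto_exp_atTop.comp <|
    (tendsto_rpow_atTop hγ).comp <| tendsto_atTop_add_const_right _ 1 tendsto_natCast_atTop_atTop

theorem isEquivalent_log_doubleExpSeq_succ (h0 : 0 < γ) (h1 : γ < 1) :
    (fun j => log (doubleExpSeq γ (j + 1))) ~[atTop] fun j => log (doubleExpSeq γ j) := by
  have hexp : Tendsto (fun j : ℕ => exp (((j : ℝ) + 1) ^ γ)) atTop atTop :=
    tendsto_exp_atTop.comp <| (tendsto_rpow_atTop h0).comp <|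
      tendsto_atTop_add_const_right _ 1 tendsto_natCast_atTop_atTop
  have hstep : Tendsto (fun j : ℕ => (((j + 1 : ℕ) : ℝ) + 1) ^ γ - ((j : ℝ) + 1) ^ γ) atTop
      (𝓝 0) := by
    simpa [Function.comp_def] using (tendsto_rpow_add_one_sub_rpow h0.le h1).comp
      (tendsto_atTop_add_const_right _ 1 tendsto_natCast_atTop_atTop)
  exact ((isEquivalent_log_natCeil_exp (hexp.comp (tendsto_add_atTop_nat 1))).trans
    (isEquivalent_exp_of_tendsto_sub hstep)).trans (isEquivalent_log_natCeil_exp hexp).symm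

theorem summable_log_log_doubleExpSeq_rpow_neg {s : ℝ} (hs : 0 ≤ s) (h : 1 < γ * s) :
    Summable fun j => log (log (doubleExpSeq γ j)) ^ (-s) := by
  have hsum : Summable fun j : ℕ => ((j : ℝ) + 1) ^ (-(γ * s)) := by
    simpa using (summable_nat_add_iff 1).2 (Real.summable_nat_rpow.2 (by linarith))
  refine Summable.of_nonneg_of_le (fun j => rpow_nonneg ?_ _) (fun j => ?_) hsum
  · exact (rpow_pos_of_pos (by positivity) _).le.trans (rpow_le_log_log_doubleExpSeq γ j)
  calc log (log (doubleExpSeq γ j)) ^ (-s) ≤ (((j : ℝ) + 1) ^ γ) ^ (-s) :=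
        rpow_le_rpow_of_nonpos (by positivity) (rpow_le_log_log_doubleExpSeq γ j) (by linarith)
    _ = ((j : ℝ) + 1) ^ (-(γ * s)) := by rw [← rpow_mul (by positivity), mul_neg]

end doubleExpSeq

noncomputable def logWeightedSum (x : ℕ → ℝ) (n : ℕ) : ℝ :=
  ∑ k ∈ Finset.Icc 1 n, 1 / (k : ℝ) * x k

theorem logWeightedSum_const (p : ℝ) (n : ℕ) :
    logWeightedSum (fun _ => p) n = p * harmonic n := by
  simp [logWeightedSum, harmonic_eq_sum_Icc, Finset.mul_sum, mul_comm]

theorem logWeightedSum_sub (x y : ℕ → ℝ) (n : ℕ) :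
    logWeightedSum (fun k => x k - y k) n = logWeightedSum x n - logWeightedSum y n := by
  simp only [logWeightedSum, mul_sub, Finset.sum_sub_distrib]

theorem abs_logWeightedSum_sub_le {x : ℕ → ℝ} {C : ℝ} (hx : ∀ k, |x k| ≤ C) {m n : ℕ}
    (hmn : m ≤ n) :
    |logWeightedSum x n - logWeightedSum x m| ≤ C * harmonic n - C * harmonic m := by
  rw [← logWeightedSum_const, ← logWeightedSum_const]
  refine abs_sum_sub_sum_le_of_subset (Finset.Icc_subset_Icc_right hmn) fun k => ?_
  rw [abs_mul, abs_of_nonneg (by positivity)]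
  exact mul_le_mul_of_nonneg_left (hx k) (by positivity)

theorem tendsto_logWeightedSum_of_isLittleO_doubleExpSeq {x : ℕ → ℝ} {p C γ : ℝ}
    (hx : ∀ k, |x k - p| ≤ C) (h0 : 0 < γ) (h1 : γ < 1)
    (hsub : (fun j => logWeightedSum x (doubleExpSeq γ j) - p * harmonic (doubleExpSeq γ j))
      =o[atTop] fun j => log (doubleExpSeq γ j)) :
    Tendsto (fun n : ℕ => 1 / log n * logWeightedSum x n) atTop (𝓝 p) := by
  have hcentre : ∀ n, logWeightedSum x n - p * harmonic n =
      logWeightedSum (fun k => x k - p) n := fun n => by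
    rw [logWeightedSum_sub, logWeightedSum_const]
  have hgap := ((isEquivalent_harmonic_log.isLittleO_sub_comp_succ (tendsto_doubleExpSeq h0)
    (isEquivalent_log_doubleExpSeq_succ h0 h1)).const_mul_left C).congr_left
      fun j => mul_sub _ _ _
  have hinc : ∀ m n, m ≤ n → |(logWeightedSum x n - p * harmonic n) -
      (logWeightedSum x m - p * harmonic m)| ≤ C * harmonic n - C * harmonic m :=
    fun m n hmn => by simpa only [hcentre] using abs_logWeightedSum_sub_le hx hmn
  have ht : (fun n => logWeightedSum x n - p * harmonic n) =o[atTop] fun n : ℕ => log n :=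
    isLittleO_of_isLittleO_comp_of_abs_sub_le (tendsto_doubleExpSeq h0) monotone_log_natCast
      log_natCast_nonneg hinc hsub hgap
  refine tendsto_one_div_mul_of_isLittleO_sub ?_
    ((eventually_gt_atTop 1).mono fun n hn => (log_pos (by exact_mod_cast hn)).ne')
  refine (ht.add (isEquivalent_harmonic_log.isLittleO.const_mul_left p)).congr_left fun n => ?_
  simp only [Pi.sub_apply]
  ring

theorem ae_isLittleO_of_summable_variance_div_sq {Ω : Type*} [MeasurableSpace Ω]
    {μ : Measure Ω} [IsFiniteMeasure μ] {X : ℕ → Ω → ℝ} (hX : ∀ j, MemLp (X j) 2 μ)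
    {b : ℕ → ℝ} (hb : ∀ j, 0 < b j) (hsum : Summable fun j => variance (X j) μ / b j ^ 2) :
    ∀ᵐ ω ∂μ, (fun j => X j ω - μ[X j]) =o[atTop] b := by
  have hdev : ∀ m : ℕ, ∀ᵐ ω ∂μ, ∀ᶠ j in atTop, |X j ω - μ[X j]| < b j / (m + 1) := by
    intro m
    have hcheb : ∀ j, μ {ω | b j / (m + 1) ≤ |X j ω - μ[X j]|} ≤
        ENNReal.ofReal ((m + 1) ^ 2 * (variance (X j) μ / b j ^ 2)) := fun j => by
      convert meas_ge_le_variance_div_sq (hX j) (div_pos (hb j) m.cast_add_one_pos) using 2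
      field_simp
    have hfin : ∑' j, μ {ω | b j / (m + 1) ≤ |X j ω - μ[X j]|} ≠ ⊤ := by
      refine ne_top_of_le_ne_top ?_ (ENNReal.tsum_le_tsum hcheb)
      rw [← ENNReal.ofReal_tsum_of_nonneg (fun j => by positivity [variance_nonneg (X j) μ])
        (hsum.mul_left _)]
      exact ENNReal.ofReal_ne_top
    filter_upwards [ae_eventually_notMem hfin] with ω hω
    simpa using hω
  filter_upwards [ae_all_iff.2 hdev] with ω hω
  refine IsLittleO.of_bound fun δ hδ => ?_
  obtain ⟨m, hm⟩ := exists_nat_one_div_lt hδ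
  filter_upwards [hω m] with j hj
  rw [Real.norm_eq_abs, Real.norm_of_nonneg (hb j).le]
  calc |X j ω - μ[X j]| ≤ b j / (m + 1) := hj.le
    _ = 1 / (m + 1) * b j := by ring
    _ ≤ δ * b j := mul_le_mul_of_nonneg_right hm.le (hb j).le

section Moments

variable {Ω : Type*} [MeasurableSpace Ω] {μ : Measure Ω} {η : ℕ → Ω → ℝ}

theorem memLp_logWeightedSum {q : ENNReal} (hη : ∀ k, MemLp (η k) q μ) (n : ℕ) :
    MemLp (fun ω => logWeightedSum (η · ω) n) q μ :=
  memLp_finsetSum _ fun k _ => (hη k).const_mul _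

theorem integral_logWeightedSum {p : ℝ} (hη : ∀ k, Integrable (η k) μ)
    (hmean : ∀ k, 1 ≤ k → ∫ ω, η k ω ∂μ = p) (n : ℕ) :
    ∫ ω, logWeightedSum (η · ω) n ∂μ = p * harmonic n := by
  rw [← logWeightedSum_const]
  simp only [logWeightedSum]
  rw [integral_finsetSum _ fun k _ => (hη k).const_mul _]
  refine Finset.sum_congr rfl fun k hk => ?_
  rw [integral_const_mul, hmean k (Finset.mem_Icc.1 hk).1]

end Moments

theorem stmt_19_general {Ω : Type*} [MeasureSpace Ω] [IsProbabilityMeasure (ℙ : Measure Ω)]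
    (η : ℕ → Ω → ℝ) (hmeas : ∀ k, Measurable (η k))
    (hbdd : ∀ k ω, |η k ω| ≤ 1)
    (c ε p : ℝ) (hε : 0 < ε)
    (hvar : ∀ n : ℕ, 3 ≤ n →
      variance (fun ω => ∑ k ∈ Finset.Icc 1 n, (1 / (k : ℝ)) * η k ω) ℙ ≤
        c * (Real.log n) ^ 2 * (Real.log (Real.log n)) ^ (-(1 + ε)))
    (hmean : ∀ k : ℕ, 1 ≤ k → ∫ ω, η k ω = p) :
    ∀ᵐ ω, Tendsto (fun n : ℕ =>
        (1 / Real.log n) * ∑ k ∈ Finset.Icc 1 n, (1 / (k : ℝ)) * η k ω)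
      atTop (nhds p) := by
  obtain ⟨γ, hγε, hγ1⟩ :=
    exists_between ((div_lt_one (by linarith)).2 (by linarith) : 1 / (1 + ε) < 1)
  have hγ0 : 0 < γ := lt_trans (by positivity) hγε
  have hγs : 1 < γ * (1 + ε) := by rwa [div_lt_iff₀ (by linarith)] at hγε
  set M := doubleExpSeq γ
  have hLp : ∀ k q, MemLp (η k) q ℙ := fun k q =>
    MemLp.of_bound (hmeas k).aestronglyMeasurable 1 (ae_of_all _ fun ω => hbdd k ω)
  have hp : |p| ≤ 1 := by
    simpa [← hmean 1 le_rfl] using norm_integral_le_of_norm_le_const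
      (ae_of_all ℙ fun ω => (Real.norm_eq_abs _).trans_le (hbdd 1 ω))
  have hlogM : ∀ j, 0 < log (M j) := fun j => one_pos.trans_le (one_le_log_doubleExpSeq γ j)
  have hsum : Summable fun j => variance (fun ω => logWeightedSum (η · ω) (M j)) ℙ /
      log (M j) ^ 2 := by
    refine Summable.of_nonneg_of_le (fun j => div_nonneg (variance_nonneg _ _) (sq_nonneg _))
      (fun j => ?_) ((summable_log_log_doubleExpSeq_rpow_neg (by linarith) hγs).mul_left c)
    rw [div_le_iff₀ (pow_pos (hlogM j) 2)]
    exact (hvar (M j) (three_le_doubleExpSeq γ j)).trans_eq (by ring)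
  filter_upwards [ae_isLittleO_of_summable_variance_div_sq
    (fun j => memLp_logWeightedSum (fun k => hLp k 2) (M j)) hlogM hsum] with ω hω
  refine tendsto_logWeightedSum_of_isLittleO_doubleExpSeq (C := 2)
    (fun k => by linarith [abs_sub (η k ω) p, hbdd k ω]) hγ0 hγ1 ?_
  simpa only [integral_logWeightedSum (fun k => (hLp k 1).integrable le_rfl) hmean] using hω

theorem stmt_19 {Ω : Type*} [MeasureSpace Ω] [IsProbabilityMeasure (ℙ : Measure Ω)]
    (η : ℕ → Ω → ℝ) (hmeas : ∀ k, Measurable (η k))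
    (hbdd : ∀ k ω, |η k ω| ≤ 1)
    (c ε p : ℝ) (hc : 0 < c) (hε : 0 < ε)
    (hvar : ∀ n : ℕ, 3 ≤ n →
      variance (fun ω => ∑ k ∈ Finset.Icc 1 n, (1 / (k : ℝ)) * η k ω) ℙ ≤
        c * (Real.log n) ^ 2 * (Real.log (Real.log n)) ^ (-(1 + ε)))
    (hmean : ∀ k : ℕ, 1 ≤ k → ∫ ω, η k ω = p) :
    ∀ᵐ ω, Tendsto (fun n : ℕ =>
        (1 / Real.log n) * ∑ k ∈ Finset.Icc 1 n, (1 / (k : ℝ)) * η k ω)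
      atTop (nhds p) :=
  stmt_19_general η hmeas hbdd c ε p hε hvar hmean
end
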